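/- arXiv:0908.3324 — 6 statements merged into one kernel-verified Lean document; each statement's English description precedes it below -/
import Mathlib

section
/- If G is a finite simple graph with an odd number of vertices, then the determinant of its adjacency matrix is an even integer. -/
/-!
In characteristic two the determinant of a symmetric matrix is a sum over permutations in which
`σ` and `σ⁻¹` contribute the same term, so only the involutions survive. When the size is odd
every involution has a fixed point, and its term contains a diagonal entry; for an adjacency
matrix these vanish. Reducing modulo two, the integer determinant is therefore even.
-/

open Finset

namespace Matrix

variable {n R : Type*} [Fintype n] [CommRing R]

lemma prod_perm_inv_eq_of_isSymm {A : Matrix n n R} (hA : A.IsSymm) (σ : Equiv.Perm n) :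
    ∏ i, A (σ⁻¹ i) i = ∏ i, A (σ i) i := by
  rw [← Equiv.prod_comp σ]
  simp only [Equiv.Perm.coe_inv, Equiv.symm_apply_apply]
  exact prod_congr rfl fun i _ => hA.apply (σ i) i

theorem det_eq_zero_of_isSymm_of_diag_eq_zero [DecidableEq n] [CharP R 2]
    (hn : Odd (Fintype.card n)) {A : Matrix n n R} (hA : A.IsSymm) (hdiag : A.diag = 0) :
    A.det = 0 := by
  rw [det_apply]
  refine sum_ninvolution (fun σ => σ⁻¹) (fun σ => ?_) (fun σ hterm hinv => ?_)
    (fun σ => mem_univ _) inv_inv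
  · rw [Equiv.Perm.sign_inv, prod_perm_inv_eq_of_isSymm hA, ← smul_add,
      CharTwo.add_self_eq_zero, smul_zero]
  · have hsq : σ ^ 2 ^ 1 = 1 := by
      rw [pow_one, sq]
      exact mul_eq_one_iff_eq_inv.mpr hinv.symm
    obtain ⟨i, hi⟩ := Equiv.Perm.exists_fixed_point_of_prime hn.not_two_dvd_nat hsq
    exact hterm (by rw [prod_eq_zero (mem_univ i) (by rw [hi]; exact congrFun hdiag i), smul_zero])

end Matrix

lemma SimpleGraph.map_adjMatrix {V α β : Type*} (G : SimpleGraph V) [DecidableRel G.Adj]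
    [Zero α] [One α] [Zero β] [One β] {f : α → β} (h0 : f 0 = 0) (h1 : f 1 = 1) :
    (G.adjMatrix α).map f = G.adjMatrix β := by
  ext i j
  by_cases hij : G.Adj i j <;> simp [hij, h0, h1]

theorem det_even_of_odd_card {V : Type*} [Fintype V] [DecidableEq V]
    (G : SimpleGraph V) [DecidableRel G.Adj]
    (h : Odd (Fintype.card V)) :
    Even ((G.adjMatrix ℤ).det) := by
  rw [← ZMod.intCast_eq_zero_iff_even, ← eq_intCast (Int.castRingHom (ZMod 2)), RingHom.map_det,
    RingHom.mapMatrix_apply, G.map_adjMatrix (map_zero _) (map_one _)]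
  exact Matrix.det_eq_zero_of_isSymm_of_diag_eq_zero h G.isSymm_adjMatrix (G.diag_adjMatrix _)
end

section
/- For every natural number n ≥ 1, there exists a simple graph G on n vertices with det(G) < 0 if and only if n ≠ 1 and n ≠ 3. -/
/-!
The complete graph has `det K_m = (-1)^m (1 - m)`, and the determinant is multiplicative under
disjoint union (the adjacency matrix is block diagonal). So `K_n` works for even `n ≥ 2`, and
`K_2 ⊔ K_{n-2}` works for odd `n ≥ 5`, with determinant `3 - n`. Conversely, a single vertex
gives the zero matrix, and a symmetric `3 × 3` matrix with zero diagonal has determinant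
`2 a b c`, which is nonnegative for `0/1` entries.
-/

open Matrix

theorem Matrix.det_fin_three_of_isSymm_of_diag_eq_zero {R : Type*} [CommRing R]
    {A : Matrix (Fin 3) (Fin 3) R} (hA : A.IsSymm) (hd : A.diag = 0) :
    A.det = 2 * A 0 1 * A 0 2 * A 1 2 := by
  have h (i j : Fin 3) : A j i = A i j := hA.apply i j
  have hzero (i : Fin 3) : A i i = 0 := congrFun hd i
  rw [det_fin_three, h 1 0, h 2 0, h 2 1, hzero 0, hzero 1, hzero 2]
  ring

namespace SimpleGraph

variable {V W R : Type*} [CommRing R]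

theorem adjMatrix_sum (G : SimpleGraph V) (H : SimpleGraph W) [DecidableRel G.Adj]
    [DecidableRel H.Adj] [DecidableRel (G ⊕g H).Adj] :
    (G ⊕g H).adjMatrix R = fromBlocks (G.adjMatrix R) 0 0 (H.adjMatrix R) := by
  ext (i | i) (j | j) <;> simp [adjMatrix_apply]

theorem det_adjMatrix_fin_three_nonneg [PartialOrder R] [IsOrderedRing R]
    (G : SimpleGraph (Fin 3)) [DecidableRel G.Adj] : 0 ≤ (G.adjMatrix R).det := by
  have hnonneg (i j : Fin 3) : 0 ≤ G.adjMatrix R i j := by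
    rw [adjMatrix_apply]; split_ifs <;> norm_num
  rw [det_fin_three_of_isSymm_of_diag_eq_zero G.isSymm_adjMatrix (G.diag_adjMatrix R)]
  exact mul_nonneg (mul_nonneg (mul_nonneg zero_le_two (hnonneg 0 1)) (hnonneg 0 2))
    (hnonneg 1 2)

variable [Fintype V] [Fintype W] [DecidableEq V] [DecidableEq W]

theorem det_adjMatrix_eq_of_iso {G : SimpleGraph V} {H : SimpleGraph W} [DecidableRel G.Adj]
    [DecidableRel H.Adj] (f : G ≃g H) : (G.adjMatrix R).det = (H.adjMatrix R).det := by
  rw [← f.reindex_adjMatrix R, det_reindex_self]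

theorem det_adjMatrix_sum (G : SimpleGraph V) (H : SimpleGraph W) [DecidableRel G.Adj]
    [DecidableRel H.Adj] [DecidableRel (G ⊕g H).Adj] :
    ((G ⊕g H).adjMatrix R).det = (G.adjMatrix R).det * (H.adjMatrix R).det := by
  rw [adjMatrix_sum, det_fromBlocks_zero₁₂]

theorem det_adjMatrix_top [DecidableRel (⊤ : SimpleGraph V).Adj] :
    ((⊤ : SimpleGraph V).adjMatrix R).det = (-1) ^ Fintype.card V * (1 - Fintype.card V) := by
  have h : (⊤ : SimpleGraph V).adjMatrix R =
      -(1 + replicateCol Unit (fun _ ↦ (-1 : R)) * replicateRow Unit (fun _ ↦ (1 : R))) := by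
    ext i j
    by_cases hij : i = j <;>
      simp [adjMatrix_apply, one_apply, hij, ← vecMulVec_eq, vecMulVec_apply]
  rw [h, det_neg, det_one_add_replicateCol_mul_replicateRow]
  simp [dotProduct, sub_eq_add_neg]

theorem det_adjMatrix_of_unique [Unique V] (G : SimpleGraph V) [DecidableRel G.Adj] :
    (G.adjMatrix R).det = 0 := by
  simp [det_unique, adjMatrix_apply]

open scoped Classical in
theorem exists_fin_det_adjMatrix_eq {n : ℕ} (hV : Fintype.card V = n) (G : SimpleGraph V)
    [DecidableRel G.Adj] :
    ∃ H : SimpleGraph (Fin n), (H.adjMatrix R).det = (G.adjMatrix R).det := by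
  let e := Fintype.equivFinOfCardEq hV
  refine ⟨G.map e, ?_⟩
  -- `convert` reconciles the classical `DecidableRel` instance on `G.map e` with Mathlib's
  convert (det_adjMatrix_eq_of_iso (R := R) (Iso.map e G)).symm

end SimpleGraph

open SimpleGraph

open scoped Classical in
theorem exists_graph_det_neg_iff (n : ℕ) (hn : 1 ≤ n) :
    (∃ G : SimpleGraph (Fin n), (G.adjMatrix ℤ).det < 0) ↔ (n ≠ 1 ∧ n ≠ 3) := by
  refine ⟨fun ⟨G, hG⟩ ↦ ⟨?_, ?_⟩, fun ⟨h1, h3⟩ ↦ ?_⟩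
  · rintro rfl
    exact hG.ne (det_adjMatrix_of_unique G)
  · rintro rfl
    exact hG.not_ge (det_adjMatrix_fin_three_nonneg G)
  obtain ⟨k, rfl | rfl⟩ := Nat.even_or_odd' n
  · obtain ⟨H, hH⟩ := exists_fin_det_adjMatrix_eq (R := ℤ) (Fintype.card_fin (2 * k)) ⊤
    refine ⟨H, ?_⟩
    rw [hH, det_adjMatrix_top, Fintype.card_fin, (even_two_mul k).neg_one_pow, one_mul]
    omega
  · obtain ⟨j, rfl⟩ : ∃ j, k = j + 1 := ⟨k - 1, by omega⟩
    have hcard : Fintype.card (Fin 2 ⊕ Fin (2 * j + 1)) = 2 * (j + 1) + 1 := by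
      rw [Fintype.card_sum, Fintype.card_fin, Fintype.card_fin]; ring
    obtain ⟨H, hH⟩ := exists_fin_det_adjMatrix_eq (R := ℤ) hcard
      ((⊤ : SimpleGraph (Fin 2)) ⊕g (⊤ : SimpleGraph (Fin (2 * j + 1))))
    refine ⟨H, ?_⟩
    rw [hH, det_adjMatrix_sum, det_adjMatrix_top, det_adjMatrix_top, Fintype.card_fin,
      Fintype.card_fin, even_two.neg_one_pow, (odd_two_mul_add_one j).neg_one_pow]
    omega
end

section
/- Let G be a finite simple graph with n ≥ 2 vertices and m edges. Then, as real numbers, |det(G)| ≤ (2m/n)^n · (1 - (2m - n)/(n(n-1)))^(n-1). -/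
/-!
Write `λ₁, …, λₙ` for the eigenvalues of the adjacency matrix `A`, so that `det A = ∏ λᵢ` and
`∑ λᵢ² = tr A² = 2m`, and the Rayleigh quotient of the all-ones vector provides an eigenvalue
`λ₁ ≥ 2m/n`. The inequality `x ≤ a · exp (x/a - 1)` gives a weighted AM-GM inequality; with weight
`c = (2m/n)²` on `λ₁²` and `b = (2m - c)/(n - 1)` on the other `λᵢ²` it yields `(det A)² ≤ c · bⁿ⁻¹`.
When `n ≤ 2m ≤ n(n - 1)` we have `b ≥ 1`, so `|det A| ≤ (2m/n) · bⁿ⁻¹`, which is the bound.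
When `2m < n` some vertex is isolated and `det A = 0`.
-/

open Matrix Finset

theorem Finset.prod_le_prod_of_sum_div_le_card {ι : Type*} (s : Finset ι) {x a : ι → ℝ}
    (hx : ∀ i ∈ s, 0 ≤ x i) (ha : ∀ i ∈ s, 0 < a i) (h : ∑ i ∈ s, x i / a i ≤ #s) :
    ∏ i ∈ s, x i ≤ ∏ i ∈ s, a i := by
  have hpoint : ∀ i ∈ s, x i ≤ a i * Real.exp (x i / a i - 1) := fun i hi => by
    calc x i = a i * (x i / a i) := by field_simp [(ha i hi).ne']
      _ ≤ a i * Real.exp (x i / a i - 1) := by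
        gcongr
        · exact (ha i hi).le
        · simpa using Real.add_one_le_exp (x i / a i - 1)
  have hexp : Real.exp (∑ i ∈ s, (x i / a i - 1)) ≤ 1 := by
    rw [Real.exp_le_one_iff, sum_sub_distrib, sum_const, nsmul_one]
    linarith
  calc ∏ i ∈ s, x i ≤ ∏ i ∈ s, a i * Real.exp (x i / a i - 1) := prod_le_prod hx hpoint
    _ = (∏ i ∈ s, a i) * Real.exp (∑ i ∈ s, (x i / a i - 1)) := by
        rw [prod_mul_distrib, Real.exp_sum]
    _ ≤ ∏ i ∈ s, a i :=
        mul_le_of_le_one_right (prod_nonneg fun i hi => (ha i hi).le) hexp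

theorem sq_prod_le_mul_pow_of_le_sq {ι : Type*} [Fintype ι] (f : ι → ℝ) {i₀ : ι} {c : ℝ}
    (hc : 0 < c) (hci₀ : c ≤ f i₀ ^ 2) (hcs : c < ∑ i, f i ^ 2)
    (hsc : ∑ i, f i ^ 2 ≤ Fintype.card ι * c) :
    (∏ i, f i) ^ 2 ≤
      c * ((∑ i, f i ^ 2 - c) / (Fintype.card ι - 1)) ^ (Fintype.card ι - 1) := by
  classical
  set s := ∑ i, f i ^ 2
  set N : ℝ := (Fintype.card ι : ℝ)
  set b := (s - c) / (N - 1)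
  have hN : 1 < N := by
    by_contra! hN
    nlinarith
  have hb : 0 < b := div_pos (by linarith) (by linarith)
  have hbc : b ≤ c := by
    rw [div_le_iff₀ (by linarith)]
    linarith
  have hsb : (s - c) / b = N - 1 := div_div_cancel₀ (by linarith)
  set a : ι → ℝ := fun i => if i = i₀ then c else b
  have ha : ∀ i ∈ univ.erase i₀, a i = b := fun i hi => if_neg (ne_of_mem_erase hi)
  have hrest : ∑ i ∈ univ.erase i₀, f i ^ 2 = s - f i₀ ^ 2 := by
    linarith [add_sum_erase univ (fun i => f i ^ 2) (mem_univ i₀)]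
  -- With `t = f i₀ ^ 2`, the weighted sum is `N - (t - c) * (1 / b - 1 / c)`.
  have hweighted : ∑ i, f i ^ 2 / a i ≤ #(univ : Finset ι) := by
    rw [← add_sum_erase _ _ (mem_univ i₀),
      sum_congr rfl fun i hi => by rw [ha i hi], ← sum_div, hrest, card_univ]
    have hmono : (f i₀ ^ 2 - c) / c ≤ (f i₀ ^ 2 - c) / b :=
      div_le_div_of_nonneg_left (by linarith) hb hbc
    have hsplit : (s - f i₀ ^ 2) / b = (s - c) / b - (f i₀ ^ 2 - c) / b := by ring
    have hone : f i₀ ^ 2 / c = 1 + (f i₀ ^ 2 - c) / c := by field_simp; ring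
    rw [show a i₀ = c from if_pos rfl, hone, hsplit, hsb]
    linarith
  have hprod : ∏ i, a i = c * b ^ (Fintype.card ι - 1) := by
    rw [← mul_prod_erase _ _ (mem_univ i₀), prod_congr rfl ha,
      prod_const, card_erase_of_mem (mem_univ i₀), card_univ]
    rw [show a i₀ = c from if_pos rfl]
  rw [← prod_pow, ← hprod]
  refine prod_le_prod_of_sum_div_le_card _ (fun i _ => sq_nonneg _) (fun i _ => ?_) hweighted
  simp only [a]
  split_ifs <;> assumption

theorem abs_prod_le_of_sum_sq {ι : Type*} [Fintype ι] (f : ι → ℝ) {i₀ : ι}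
    (hNs : (Fintype.card ι : ℝ) ≤ ∑ i, f i ^ 2)
    (hsN : ∑ i, f i ^ 2 ≤ Fintype.card ι * (Fintype.card ι - 1))
    (hi₀ : (∑ i, f i ^ 2) / Fintype.card ι ≤ |f i₀|) :
    |∏ i, f i| ≤ ((∑ i, f i ^ 2) / Fintype.card ι) ^ Fintype.card ι *
      (1 - (∑ i, f i ^ 2 - Fintype.card ι) /
        (Fintype.card ι * (Fintype.card ι - 1))) ^ (Fintype.card ι - 1) := by
  have hcard : 1 ≤ Fintype.card ι := Fintype.card_pos_iff.mpr ⟨i₀⟩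
  set s := ∑ i, f i ^ 2
  set k := Fintype.card ι - 1
  set N : ℝ := (Fintype.card ι : ℝ)
  have hN : 2 ≤ N := by
    have : (1 : ℝ) ≤ N := Nat.one_le_cast.mpr hcard
    nlinarith
  have hs : 0 < s := by linarith
  have ha₁ : 1 ≤ s / N := (one_le_div₀ (by linarith)).mpr hNs
  have haN : s / N ≤ N - 1 := (div_le_iff₀ (by linarith)).mpr (by linarith)
  have hsa : s = N * (s / N) := (mul_div_cancel₀ _ (by linarith)).symm
  set q := 1 - (s - N) / (N * (N - 1))
  set b := (s - (s / N) ^ 2) / (N - 1)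
  have hbq : b = s / N * q := by
    have : N - 1 ≠ 0 := by linarith
    simp only [b, q]
    field_simp
    ring
  have hb : 1 ≤ b := by
    rw [le_div_iff₀ (by linarith), one_mul]
    nlinarith [mul_nonneg (sub_nonneg.2 ha₁) (sub_nonneg.2 haN)]
  have hsq : (∏ i, f i) ^ 2 ≤ (s / N) ^ 2 * b ^ k := by
    refine sq_prod_le_mul_pow_of_le_sq f (i₀ := i₀) (by positivity) ?_ ?_ ?_
    · rw [← sq_abs (f i₀)]
      exact pow_le_pow_left₀ (by positivity) hi₀ 2
    · nlinarith
    · nlinarith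
  calc |∏ i, f i| ≤ s / N * b ^ k := by
        refine abs_le_of_sq_le_sq ?_ (by positivity)
        calc (∏ i, f i) ^ 2 ≤ (s / N) ^ 2 * b ^ k := hsq
          _ ≤ (s / N) ^ 2 * (b ^ k * b ^ k) := by
            gcongr
            exact le_mul_of_one_le_left (by positivity) (one_le_pow₀ hb)
          _ = (s / N * b ^ k) ^ 2 := by ring
    _ = (s / N) ^ Fintype.card ι * q ^ k := by
        rw [hbq, mul_pow, ← mul_assoc, ← pow_succ', Nat.sub_add_cancel hcard]

namespace Matrix.IsHermitian

variable {n : Type*} [Fintype n] [DecidableEq n] {A : Matrix n n ℝ} (hA : A.IsHermitian)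
include hA

theorem trace_mul_self_eq_sum_sq_eigenvalues :
    (A * A).trace = ∑ i, hA.eigenvalues i ^ 2 := by
  conv_lhs => rw [hA.spectral_theorem, ← map_mul, Unitary.conjStarAlgAut_apply, trace_mul_cycle,
    ← mul_assoc, Unitary.coe_star_mul_self, one_mul, diagonal_mul_diagonal, trace_diagonal]
  simp [sq]

theorem exists_dotProduct_mulVec_le_eigenvalue_mul [Nonempty n] (x : n → ℝ) :
    ∃ i, x ⬝ᵥ (A *ᵥ x) ≤ hA.eigenvalues i * (x ⬝ᵥ x) := by
  set U : Matrix n n ℝ := (hA.eigenvectorUnitary : Matrix n n ℝ)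
  have hUstar : star U = Uᵀ := conjTranspose_eq_transpose_of_trivial U
  have hU : U * Uᵀ = 1 := hUstar ▸ Unitary.coe_mul_star_self _
  have hyy : (x ᵥ* U) ⬝ᵥ (x ᵥ* U) = x ⬝ᵥ x := by
    conv_lhs => arg 2; rw [← mulVec_transpose]
    rw [dotProduct_mulVec, vecMul_vecMul, hU, vecMul_one]
  have hxAx : x ⬝ᵥ (A *ᵥ x) = ∑ j, hA.eigenvalues j * (x ᵥ* U) j ^ 2 := by
    conv_lhs => rw [hA.spectral_theorem, Unitary.conjStarAlgAut_apply, ← mulVec_mulVec,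
      ← mulVec_mulVec, dotProduct_mulVec, hUstar, mulVec_transpose]
    simp only [dotProduct, mulVec_diagonal, Function.comp_apply, RCLike.ofReal_real_eq_id, id]
    exact sum_congr rfl fun j _ => by ring
  obtain ⟨i, -, hi⟩ := exists_max_image univ hA.eigenvalues univ_nonempty
  refine ⟨i, ?_⟩
  rw [hxAx, ← hyy, dotProduct, mul_sum]
  refine sum_le_sum fun j _ => ?_
  rw [← sq]
  exact mul_le_mul_of_nonneg_right (hi j (mem_univ j)) (sq_nonneg _)

end Matrix.IsHermitian

namespace SimpleGraph

variable {V : Type*} [Fintype V] (G : SimpleGraph V) [DecidableRel G.Adj]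

theorem exists_isIsolated_of_two_mul_card_edgeFinset_lt
    (h : 2 * #G.edgeFinset < Fintype.card V) : ∃ v, G.IsIsolated v := by
  by_contra! hne
  have : Fintype.card V ≤ ∑ v, G.degree v := by
    simpa using sum_le_sum fun v (_ : v ∈ univ) =>
      Nat.one_le_iff_ne_zero.2 ((G.degree_eq_zero v).not.2 (hne v))
  rw [sum_degrees_eq_twice_card_edges] at this
  omega

variable [DecidableEq V]

theorem det_adjMatrix_eq_zero_of_isIsolated {R : Type*} [CommRing R] {v : V}
    (hv : G.IsIsolated v) : (G.adjMatrix R).det = 0 :=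
  det_eq_zero_of_row_eq_zero v fun w => by simp [adjMatrix_apply, hv w]

theorem intCast_det_adjMatrix (R : Type*) [CommRing R] :
    ((G.adjMatrix ℤ).det : R) = (G.adjMatrix R).det := by
  rw [← eq_intCast (Int.castRingHom R), RingHom.map_det]
  congr 1
  ext v w
  by_cases h : G.Adj v w <;> simp [adjMatrix_apply, h]

theorem sum_sq_eigenvalues_adjMatrix :
    ∑ i, (G.isHermitian_adjMatrix ℝ).eigenvalues i ^ 2 = 2 * #G.edgeFinset := by
  rw [← (G.isHermitian_adjMatrix ℝ).trace_mul_self_eq_sum_sq_eigenvalues, trace]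
  simp only [diag_apply, adjMatrix_mul_self_apply_self]
  exact_mod_cast G.sum_degrees_eq_twice_card_edges

theorem exists_average_degree_le_eigenvalue_adjMatrix [Nonempty V] :
    ∃ i, 2 * #G.edgeFinset / (Fintype.card V : ℝ) ≤
      (G.isHermitian_adjMatrix ℝ).eigenvalues i := by
  obtain ⟨i, hi⟩ := (G.isHermitian_adjMatrix ℝ).exists_dotProduct_mulVec_le_eigenvalue_mul 1
  have hquad : (1 : V → ℝ) ⬝ᵥ (G.adjMatrix ℝ *ᵥ 1) = 2 * #G.edgeFinset := by
    rw [dotProduct_comm, ← natCast_card_dart_eq_dotProduct, dart_card_eq_twice_card_edges]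
    push_cast
    rfl
  have hnorm : (1 : V → ℝ) ⬝ᵥ 1 = Fintype.card V := by simp
  rw [hquad, hnorm] at hi
  exact ⟨i, (div_le_iff₀ (by simp [Fintype.card_pos])).mpr hi⟩

end SimpleGraph

theorem abs_det_le_ryser_bound {V : Type*} [Fintype V] [DecidableEq V]
    (G : SimpleGraph V) [DecidableRel G.Adj]
    (n m : ℕ) (hn : n = Fintype.card V) (hm : m = G.edgeFinset.card) (h2 : 2 ≤ n) :
    |(((G.adjMatrix ℤ).det : ℤ) : ℝ)| ≤
      (2 * (m : ℝ) / n) ^ n * (1 - (2 * (m : ℝ) - n) / (n * (n - 1))) ^ (n - 1) := by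
  subst hn hm
  rw [G.intCast_det_adjMatrix ℝ]
  rcases lt_or_ge (2 * #G.edgeFinset) (Fintype.card V) with hsparse | hdense
  · obtain ⟨v, hv⟩ := G.exists_isIsolated_of_two_mul_card_edgeFinset_lt hsparse
    have hsparse' : (2 * #G.edgeFinset : ℝ) < Fintype.card V := by exact_mod_cast hsparse
    have hn : (2 : ℝ) ≤ Fintype.card V := by exact_mod_cast h2
    have : (2 * #G.edgeFinset - Fintype.card V : ℝ) / (Fintype.card V * (Fintype.card V - 1)) ≤ 0 :=
      div_nonpos_of_nonpos_of_nonneg (by linarith) (by nlinarith)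
    rw [G.det_adjMatrix_eq_zero_of_isIsolated hv, abs_zero]
    exact mul_nonneg (by positivity) (pow_nonneg (by linarith) _)
  · have : Nonempty V := Fintype.card_pos_iff.mp (by omega)
    have hA := G.isHermitian_adjMatrix ℝ
    have hsum := G.sum_sq_eigenvalues_adjMatrix
    obtain ⟨i₀, hi₀⟩ := G.exists_average_degree_le_eigenvalue_adjMatrix
    have hedges : (2 * #G.edgeFinset : ℝ) ≤ Fintype.card V * (Fintype.card V - 1) := by
      have := Nat.cast_le (α := ℝ).mpr G.card_edgeFinset_le_card_choose_two
      rw [Nat.cast_choose_two] at this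
      linarith
    have := abs_prod_le_of_sum_sq hA.eigenvalues (i₀ := i₀) (by rw [hsum]; exact_mod_cast hdense)
      (by rwa [hsum]) (by rw [hsum]; exact hi₀.trans (le_abs_self _))
    rw [hA.det_eq_prod_eigenvalues]
    simpa [hsum] using this
end

section
/- Let G be a finite simple graph with m ≥ 1 edges, and let d be the greatest common divisor of the degrees of all vertices of G. Then the integer d · gcd(2m/d, d) divides det(G). -/
/-!
Adding all rows of a square matrix to one of them, and then all columns to the corresponding
column, does not change the determinant; afterwards that row holds the column sums, that column
the row sums, and their common corner entry the total sum. Hence if `d` divides every column sum,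
`e` every row sum and `d * e` the total, pulling `d` out of the row leaves a column divisible by
`e`, so `d * e` divides the determinant. For the adjacency matrix all these sums are degrees,
with total `2m`, and `e = gcd (2m/d) d` works.
-/

namespace Matrix

variable {n R : Type*} [Fintype n] [DecidableEq n] [CommRing R]

theorem dvd_det_of_forall_dvd_col (A : Matrix n n R) (j : n) {e : R} (h : ∀ i, e ∣ A i j) :
    e ∣ A.det := by
  choose b hb using h
  have hA : A = A.updateCol j (e • b) := by
    conv_lhs => rw [← updateCol_eq_self A j]
    congr 1
    funext i
    exact hb i
  rw [hA, det_updateCol_smul]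
  exact dvd_mul_right _ _

theorem mul_dvd_det_of_row_eq_smul (A : Matrix n n R) {i₀ j₀ : n} {d e : R} {b : n → R}
    (hrow : A i₀ = d • b) (hb : e ∣ b j₀) (hcol : ∀ i ≠ i₀, e ∣ A i j₀) : d * e ∣ A.det := by
  have hA : A = (A.updateRow i₀ b).updateRow i₀ (d • b) := by
    rw [updateRow_idem, ← hrow, updateRow_eq_self]
  rw [hA, det_updateRow_smul]
  refine mul_dvd_mul_left d (dvd_det_of_forall_dvd_col _ j₀ fun i => ?_)
  by_cases hi : i = i₀
  · subst hi
    simpa using hb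
  · simpa [updateRow_ne hi] using hcol i hi

theorem mul_dvd_det_of_dvd_sums [Nonempty n] (A : Matrix n n R) {d e : R}
    (hcol : ∀ j, d ∣ ∑ i, A i j) (hrow : ∀ i, e ∣ ∑ j, A i j)
    (htot : d * e ∣ ∑ i, ∑ j, A i j) : d * e ∣ A.det := by
  obtain ⟨i₀⟩ := ‹Nonempty n›
  set B := A.updateRow i₀ (fun j => ∑ i, A i j)
  set C := B.updateCol i₀ (fun i => ∑ j, B i j)
  have hdetB : B.det = A.det := by
    have hsum : ∑ k, A k = fun j => ∑ i, A i j := by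
      funext j
      exact Finset.sum_apply (g := fun k => (A k : n → R)) ..
    simpa [hsum] using det_updateRow_sum A i₀ (fun _ => 1)
  have hdetC : C.det = B.det := by simpa using det_updateCol_sum B i₀ (fun _ => 1)
  choose c hc using hcol
  obtain ⟨k, hk⟩ := htot
  rw [← hdetB, ← hdetC]
  refine mul_dvd_det_of_row_eq_smul C (i₀ := i₀) (j₀ := i₀) (b := Function.update c i₀ (e * k))
    ?_ (by simp) fun i hi => ?_
  · funext j
    by_cases hj : j = i₀
    · subst hj
      simpa [C, B, mul_assoc] using Finset.sum_comm.symm.trans hk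
    · simp [C, B, hj, hc]
  · simpa [C, B, updateRow_ne hi] using hrow i

end Matrix

namespace SimpleGraph

variable {V α : Type*} [Fintype V] (G : SimpleGraph V) [DecidableRel G.Adj] [NonAssocSemiring α]

theorem sum_adjMatrix_apply_right (i : V) : ∑ j, G.adjMatrix α i j = G.degree i := by
  simpa [Matrix.mulVec, dotProduct] using G.adjMatrix_mulVec_const_apply (α := α) (a := 1) (v := i)

theorem sum_adjMatrix_apply_left (j : V) : ∑ i, G.adjMatrix α i j = G.degree j := by
  simpa [adjMatrix_apply, adj_comm] using G.sum_adjMatrix_apply_right j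

end SimpleGraph

theorem gcd_degrees_dvd_det {V : Type*} [Fintype V] [DecidableEq V]
    (G : SimpleGraph V) [DecidableRel G.Adj]
    (m : ℕ) (hm : m = G.edgeFinset.card) (hm1 : 1 ≤ m)
    (d : ℕ) (hd : d = Finset.univ.gcd (fun v => G.degree v)) :
    ((d * Nat.gcd (2 * m / d) d : ℕ) : ℤ) ∣ (G.adjMatrix ℤ).det := by
  obtain ⟨uv, -⟩ := Finset.card_pos.mp (hm ▸ hm1 : 0 < G.edgeFinset.card)
  have : Nonempty V := ⟨uv.out.1⟩
  have hdeg : ∀ v, d ∣ G.degree v := fun v => hd ▸ Finset.gcd_dvd (Finset.mem_univ v)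
  have hsum : ∑ v, G.degree v = 2 * m := hm ▸ G.sum_degrees_eq_twice_card_edges
  have htot : d * Nat.gcd (2 * m / d) d ∣ 2 * m := by
    have hd2m : d ∣ 2 * m := hsum ▸ Finset.dvd_sum fun v _ => hdeg v
    simpa [Nat.mul_div_cancel' hd2m] using Nat.mul_dvd_mul_left d (Nat.gcd_dvd_left (2 * m / d) d)
  push_cast
  refine (G.adjMatrix ℤ).mul_dvd_det_of_dvd_sums (fun j => ?_) (fun i => ?_) ?_
  · rw [G.sum_adjMatrix_apply_left]
    exact_mod_cast hdeg j
  · rw [G.sum_adjMatrix_apply_right]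
    exact_mod_cast (Nat.gcd_dvd_right _ _).trans (hdeg i)
  · simp only [G.sum_adjMatrix_apply_right]
    rw [← Nat.cast_sum, hsum]
    exact_mod_cast htot
end

section
/- Let k and ℓ be even natural numbers with k, ℓ ≥ 3, and let G be a simple graph on k + ℓ - 1 vertices that is the one-point union (wedge) of a cycle of length k and a cycle of length ℓ: there exist cycles c₁ of length k and c₂ of length ℓ in G sharing exactly one common vertex, such that every vertex of G lies on c₁ or c₂ and every edge of G is an edge of c₁ or of c₂. Then det(G) = 0. -/
/-!
The wedge of two even cycles is bipartite: colour each vertex by the parity of its position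
along the cycle containing it, shifted so that the common vertex gets colour `0` on both cycles.
A bipartite graph on an odd number of vertices has singular adjacency matrix: conjugating `A` by
the diagonal sign matrix `D` of a `2`-colouring gives `D A D = -A`, so
`det A = det (-A) = -det A`.
-/

open Matrix

namespace SimpleGraph

variable {V : Type*} {G : SimpleGraph V}

namespace Walk

variable {u : V} {p : G.Walk u u}

lemma IsCycle.natCast_eq_of_getVert_eq (hp : p.IsCycle) (he : Even p.length) {i j : ℕ}
    (hi : i ≤ p.length) (hj : j ≤ p.length) (h : p.getVert i = p.getVert j) :
    (i : ZMod 2) = j := by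
  have hlen := hp.three_le_length
  have reduce : ∀ i ≤ p.length,
      ∃ i' ≤ p.length - 1, p.getVert i' = p.getVert i ∧ (i' : ZMod 2) = i := by
    intro i hi
    rcases hi.lt_or_eq with hi | rfl
    · exact ⟨i, by omega, rfl, rfl⟩
    · exact ⟨0, by omega, by simp, by simp [he.natCast_zmod_two]⟩
  obtain ⟨i', hi', hvi, hci⟩ := reduce i hi
  obtain ⟨j', hj', hvj, hcj⟩ := reduce j hj
  rw [← hci, ← hcj, hp.getVert_injOn' hi' hj' (by rw [hvi, hvj, h])]

variable [DecidableEq V]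

lemma IsCycle.natCast_idxOf_getVert (hp : p.IsCycle) (he : Even p.length) {i : ℕ}
    (hi : i ≤ p.length) : (p.support.idxOf (p.getVert i) : ZMod 2) = i := by
  have hmem := p.getVert_mem_support i
  have hlt := List.idxOf_lt_length_iff.mpr hmem
  rw [length_support] at hlt
  exact hp.natCast_eq_of_getVert_eq he (by omega) hi (p.getVert_support_idxOf hmem)

lemma IsCycle.natCast_idxOf_ne_of_mem_edges (hp : p.IsCycle) (he : Even p.length) {x y : V}
    (h : s(x, y) ∈ p.edges) : (p.support.idxOf x : ZMod 2) ≠ p.support.idxOf y := by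
  obtain ⟨i, hi, hxy⟩ := p.mk_mem_edges_iff_exists.mp h
  have hx := hp.natCast_idxOf_getVert he hi.le
  have hy := hp.natCast_idxOf_getVert he (Nat.succ_le_of_lt hi)
  rcases Sym2.eq_iff.mp hxy with ⟨rfl, rfl⟩ | ⟨rfl, rfl⟩ <;> simp [hx, hy]

end Walk

theorem isBipartite_of_edgeSet_covered_by_even_cycles {u v w : V} {c₁ : G.Walk u u}
    {c₂ : G.Walk v v} (hc₁ : c₁.IsCycle) (hc₂ : c₂.IsCycle) (he₁ : Even c₁.length)
    (he₂ : Even c₂.length) (hw : ∀ x ∈ c₁.support, x ∈ c₂.support → x = w)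
    (hG : ∀ e ∈ G.edgeSet, e ∈ c₁.edges ∨ e ∈ c₂.edges) : G.IsBipartite := by
  classical
  let pos₁ (x : V) : ZMod 2 := c₁.support.idxOf x
  let pos₂ (x : V) : ZMod 2 := c₂.support.idxOf x
  let col (x : V) : ZMod 2 := if x ∈ c₁.support then pos₁ x - pos₁ w else pos₂ x - pos₂ w
  have col₁ : ∀ x ∈ c₁.support, col x = pos₁ x - pos₁ w := fun x hx => if_pos hx
  have col₂ : ∀ x ∈ c₂.support, col x = pos₂ x - pos₂ w := by
    intro x hx
    by_cases h : x ∈ c₁.support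
    · obtain rfl := hw x h hx
      simp [col, h]
    · exact if_neg h
  refine ⟨Coloring.mk col fun {x y} hxy => ?_⟩
  rcases hG s(x, y) hxy with h | h
  · rw [col₁ x (c₁.fst_mem_support_of_mem_edges h), col₁ y (c₁.snd_mem_support_of_mem_edges h)]
    exact fun h' => hc₁.natCast_idxOf_ne_of_mem_edges he₁ h (sub_left_inj.mp h')
  · rw [col₂ x (c₂.fst_mem_support_of_mem_edges h), col₂ y (c₂.snd_mem_support_of_mem_edges h)]
    exact fun h' => hc₂.natCast_idxOf_ne_of_mem_edges he₂ h (sub_left_inj.mp h')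

theorem IsBipartite.det_adjMatrix_eq_zero [Fintype V] [DecidableEq V] [DecidableRel G.Adj]
    {R : Type*} [CommRing R] [IsAddTorsionFree R] (hG : G.IsBipartite)
    (hodd : Odd (Fintype.card V)) : (G.adjMatrix R).det = 0 := by
  obtain ⟨C⟩ := hG
  let D : Matrix V V R := diagonal fun x => (-1) ^ (C x : ℕ)
  have hD : D * D = 1 := by
    simp only [D, diagonal_mul_diagonal, ← pow_add, ← two_mul, pow_mul, neg_one_sq, one_pow,
      diagonal_one]
  have hflip : D * G.adjMatrix R * D = -G.adjMatrix R := by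
    ext x y
    simp only [D, diagonal_mul, mul_diagonal, adjMatrix_apply]
    by_cases hxy : G.Adj x y
    · have hsum : (C x : ℕ) + C y = 1 := by
        have := C.valid hxy
        omega
      simp [hxy, ← pow_add, hsum]
    · simp [hxy]
  rw [← self_eq_neg]
  calc (G.adjMatrix R).det
      = (D * G.adjMatrix R * D).det := by
        rw [det_mul, det_mul, mul_comm, ← mul_assoc, ← det_mul, hD, det_one, one_mul]
    _ = -(G.adjMatrix R).det := by rw [hflip, det_neg, hodd.neg_one_pow, neg_one_mul]

end SimpleGraph

theorem det_wedge_of_two_even_cycles_general {V : Type*} [Fintype V] [DecidableEq V]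
    (G : SimpleGraph V) [DecidableRel G.Adj]
    (k l : ℕ) (hke : Even k) (hle : Even l)
    (hcard : Fintype.card V = k + l - 1)
    (u v : V) (c₁ : G.Walk u u) (c₂ : G.Walk v v)
    (hc₁ : c₁.IsCycle) (hc₂ : c₂.IsCycle)
    (hlen₁ : c₁.length = k) (hlen₂ : c₂.length = l)
    (hshare : ∃! w : V, w ∈ c₁.support ∧ w ∈ c₂.support)
    (hedge : ∀ e ∈ G.edgeSet, e ∈ c₁.edges ∨ e ∈ c₂.edges) :
    (G.adjMatrix ℤ).det = 0 := by
  obtain ⟨w, -, hw⟩ := hshare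
  subst hlen₁ hlen₂
  have hbip := G.isBipartite_of_edgeSet_covered_by_even_cycles hc₁ hc₂ hke hle
    (fun x h₁ h₂ => hw x ⟨h₁, h₂⟩) hedge
  have hodd : Odd (Fintype.card V) := by
    obtain ⟨a, ha⟩ := hke
    obtain ⟨b, hb⟩ := hle
    have := hc₁.three_le_length
    exact ⟨a + b - 1, by omega⟩
  exact hbip.det_adjMatrix_eq_zero hodd

theorem det_wedge_of_two_even_cycles {V : Type*} [Fintype V] [DecidableEq V]
    (G : SimpleGraph V) [DecidableRel G.Adj]
    (k l : ℕ) (hk3 : 3 ≤ k) (hl3 : 3 ≤ l) (hke : Even k) (hle : Even l)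
    (hcard : Fintype.card V = k + l - 1)
    (u v : V) (c₁ : G.Walk u u) (c₂ : G.Walk v v)
    (hc₁ : c₁.IsCycle) (hc₂ : c₂.IsCycle)
    (hlen₁ : c₁.length = k) (hlen₂ : c₂.length = l)
    (hshare : ∃! w : V, w ∈ c₁.support ∧ w ∈ c₂.support)
    (hvert : ∀ x : V, x ∈ c₁.support ∨ x ∈ c₂.support)
    (hedge : ∀ e ∈ G.edgeSet, e ∈ c₁.edges ∨ e ∈ c₂.edges) :
    (G.adjMatrix ℤ).det = 0 :=
  det_wedge_of_two_even_cycles_general G k l hke hle hcard u v c₁ c₂ hc₁ hc₂ hlen₁ hlen₂ hshare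
    hedge
end

section
/- Let k and ℓ be odd natural numbers with k, ℓ ≥ 3, and let G be a simple graph on k + ℓ - 1 vertices that is the one-point union (wedge) of a cycle of length k and a cycle of length ℓ: there exist cycles c₁ of length k and c₂ of length ℓ in G sharing exactly one common vertex, such that every vertex of G lies on c₁ or c₂ and every edge of G is an edge of c₁ or of c₂. Then det(G) = 2 · (-1)^(ℓ+k-1) · ((-1)^((ℓ-1)/2 + 1) + (-1)^((k-1)/2 + 1)). -/
/-!
List the shared vertex `w` first, then the interior vertices of each cycle in cycle order. In this
labelling the adjacency matrix is `[[0, sᵀ], [s, P₁ ⊕ P₂]]`, where `Pᵢ` is the adjacency matrix of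
a path on `2p` resp. `2q` vertices (`k = 2p + 1`, `l = 2q + 1`) and `s` marks the four path ends.
Each system `Pᵢ x = s` has an explicit alternating solution, so one column operation gives
`det = -(sᵀx) · det P₁ · det P₂`; with `det P = (-1)^p` and `sᵀx = -2 (-1)^p` on each path this is
`2 ((-1)^p + (-1)^q)`.
-/

open Matrix

namespace Matrix

variable {n R : Type*} [Fintype n] [DecidableEq n] [CommRing R]

theorem det_fromBlocks_zero_replicateRow_replicateCol (b c x : n → R) (D : Matrix n n R)
    (hx : D *ᵥ x = c) :
    (fromBlocks (0 : Matrix Unit Unit R) (replicateRow Unit b) (replicateCol Unit c) D).det =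
      -(b ⬝ᵥ x) * D.det := by
  -- subtract the combination `x` of the other columns from the first one
  have hcol : (fromBlocks (0 : Matrix Unit Unit R) (replicateRow Unit b) (replicateCol Unit c) D) *
      fromBlocks 1 0 (-replicateCol Unit x) 1 =
      fromBlocks (-(replicateRow Unit b * replicateCol Unit x)) (replicateRow Unit b) 0 D := by
    rw [fromBlocks_multiply, ← hx, replicateCol_mulVec]
    simp
  have h := congrArg det hcol
  rw [det_mul, det_fromBlocks_zero₁₂, det_fromBlocks_zero₂₁, det_one, det_one, mul_one,
    replicateRow_mul_replicateCol] at h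
  simpa [det_unique] using h

end Matrix

namespace SimpleGraph

instance (m : ℕ) : DecidableRel (pathGraph m).Adj := fun _ _ => decidable_of_iff' _ pathGraph_adj

def pathEndsIndicator (R : Type*) [Zero R] [One R] (m : ℕ) (i : Fin m) : R :=
  if (i : ℕ) = 0 ∨ (i : ℕ) + 1 = m then 1 else 0

/-- The adjacency matrix of two cycles of lengths `m₁ + 1` and `m₂ + 1` glued at one vertex, indexed
by that vertex followed by the interior vertices of each cycle in order. -/
def wedgeMatrix (R : Type*) [Zero R] [One R] (m₁ m₂ : ℕ) :
    Matrix (Unit ⊕ (Fin m₁ ⊕ Fin m₂)) (Unit ⊕ (Fin m₁ ⊕ Fin m₂)) R :=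
  fromBlocks 0 (replicateRow Unit (Sum.elim (pathEndsIndicator R m₁) (pathEndsIndicator R m₂)))
    (replicateCol Unit (Sum.elim (pathEndsIndicator R m₁) (pathEndsIndicator R m₂)))
    (fromBlocks ((pathGraph m₁).adjMatrix R) 0 0 ((pathGraph m₂).adjMatrix R))

section

variable {R : Type*} [CommRing R]

theorem det_adjMatrix_pathGraph_add_two (m : ℕ) :
    ((pathGraph (m + 2)).adjMatrix R).det = -((pathGraph m).adjMatrix R).det := by
  have hminor : (((pathGraph (m + 2)).adjMatrix R).submatrix Fin.succ (Fin.succAbove 1)).det =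
      ((pathGraph m).adjMatrix R).det := by
    rw [det_succ_column_zero, Fin.sum_univ_succ]
    have hshift : ((pathGraph (m + 2)).adjMatrix R).submatrix (Fin.succ ∘ Fin.succ)
        (Fin.succAbove 1 ∘ Fin.succ) = (pathGraph m).adjMatrix R := by
      ext i j
      simp [adjMatrix_apply, pathGraph_adj, Fin.succAbove]
    simp [adjMatrix_apply, pathGraph_adj, Fin.succAbove, hshift]
  rw [det_succ_row_zero, Fin.sum_univ_succ, Fin.sum_univ_succ]
  simp [adjMatrix_apply, pathGraph_adj, hminor]

theorem det_adjMatrix_pathGraph_two_mul (p : ℕ) :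
    ((pathGraph (2 * p)).adjMatrix R).det = (-1) ^ p := by
  induction p with
  | zero => simp
  | succ p ih => rw [mul_add, mul_one, det_adjMatrix_pathGraph_add_two, ih, pow_succ, mul_neg_one]

theorem pathEndsIndicator_dotProduct {m : ℕ} (hm : 2 ≤ m) (f : ℕ → R) :
    (pathEndsIndicator R m ⬝ᵥ fun j => f j) = f 0 + f (m - 1) := by
  have hends (j : ℕ) : (if j = 0 ∨ j + 1 = m then f j else 0) =
      if j ∈ ({0, m - 1} : Finset ℕ) then f j else 0 := by
    refine if_congr ?_ rfl rfl
    simp only [Finset.mem_insert, Finset.mem_singleton]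
    omega
  simp only [dotProduct, pathEndsIndicator, ite_mul, one_mul, zero_mul]
  rw [Fin.sum_univ_eq_sum_range (fun j => if j = 0 ∨ j + 1 = m then f j else 0),
    Finset.sum_congr rfl fun j _ => hends j, Finset.sum_ite_mem, Finset.inter_eq_right.mpr,
    Finset.sum_pair (by omega)]
  intro j
  simp only [Finset.mem_insert, Finset.mem_singleton, Finset.mem_range]
  omega

theorem adjMatrix_pathGraph_mulVec_apply {m : ℕ} (f : ℕ → R) (i : Fin m) :
    ((pathGraph m).adjMatrix R *ᵥ fun j => f j) i =
      (if (i : ℕ) + 1 < m then f (i + 1) else 0) + (if 0 < (i : ℕ) then f (i - 1) else 0) := by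
  have hsplit (j : ℕ) : (if (i : ℕ) + 1 = j ∨ j + 1 = i then f j else 0) =
      (if (i : ℕ) + 1 = j then f j else 0) +
        if 0 < (i : ℕ) then if i - 1 = j then f j else 0 else 0 := by
    split_ifs <;> first | omega | simp
  simp only [mulVec, dotProduct, adjMatrix_apply, pathGraph_adj, ite_mul, one_mul, zero_mul]
  rw [Fin.sum_univ_eq_sum_range (fun j => if (i : ℕ) + 1 = j ∨ j + 1 = i then f j else 0),
    Finset.sum_congr rfl fun j _ => hsplit j, Finset.sum_add_distrib, Finset.sum_ite_irrel,
    Finset.sum_ite_eq, Finset.sum_ite_eq, Finset.sum_const_zero]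
  simp [show (i : ℕ) - 1 < m by omega]

theorem exists_adjMatrix_pathGraph_mulVec_eq_pathEndsIndicator {p : ℕ} (hp : 0 < p) :
    ∃ x, (pathGraph (2 * p)).adjMatrix R *ᵥ x = pathEndsIndicator R (2 * p) ∧
      pathEndsIndicator R (2 * p) ⬝ᵥ x = -2 * (-1) ^ p := by
  -- the odd entries read `1, -1, 1, …` from the left end, the even ones from the right end
  set f : ℕ → R := fun i => if i % 2 = 0 then (-1) ^ (p - 1 - i / 2) else (-1) ^ (i / 2)
  have hodd (j : ℕ) : f (2 * j + 1) = (-1) ^ j := by simp [f, Nat.add_mod, Nat.add_div]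
  have heven (j : ℕ) : f (2 * j) = (-1) ^ (p - 1 - j) := by simp [f]
  have halt (n : ℕ) : (-1 : R) ^ (n + 1) + (-1) ^ n = 0 := by rw [pow_succ]; ring
  refine ⟨fun j => f j, ?_, ?_⟩
  · ext ⟨i, hi⟩
    rw [adjMatrix_pathGraph_mulVec_apply, pathEndsIndicator]
    dsimp only
    by_cases h0 : i = 0
    · simp [h0, hodd 0, show 1 < 2 * p by omega]
    by_cases hlast : i + 1 = 2 * p
    · rw [show i - 1 = 2 * (p - 1) by omega, heven]
      simp [hlast, Nat.pos_of_ne_zero h0]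
    rw [if_pos (by omega), if_pos (by omega), if_neg (by omega)]
    obtain ⟨j, rfl | rfl⟩ := Nat.even_or_odd' i
    · rw [show 2 * j + 1 = 2 * (j - 1 + 1) + 1 by omega, show 2 * j - 1 = 2 * (j - 1) + 1 by omega,
        hodd, hodd, halt]
    · rw [show 2 * j + 1 + 1 = 2 * (j + 1) by omega, Nat.add_sub_cancel, heven, heven,
        show p - 1 - j = p - 1 - (j + 1) + 1 by omega, add_comm, halt]
  · rw [pathEndsIndicator_dotProduct (by omega), show 2 * p - 1 = 2 * (p - 1) + 1 by omega,
      hodd, show f 0 = (-1) ^ (p - 1) from heven 0]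
    obtain ⟨p, rfl⟩ : ∃ p', p = p' + 1 := ⟨p - 1, by omega⟩
    rw [Nat.add_sub_cancel, pow_succ]
    ring

theorem det_wedgeMatrix {p q : ℕ} (hp : 0 < p) (hq : 0 < q) :
    (wedgeMatrix R (2 * p) (2 * q)).det = 2 * ((-1) ^ p + (-1) ^ q) := by
  obtain ⟨x₁, hx₁, hdot₁⟩ := exists_adjMatrix_pathGraph_mulVec_eq_pathEndsIndicator (R := R) hp
  obtain ⟨x₂, hx₂, hdot₂⟩ := exists_adjMatrix_pathGraph_mulVec_eq_pathEndsIndicator (R := R) hq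
  have hsign (n : ℕ) : ((-1 : R) ^ n) ^ 2 = 1 := by rw [← pow_mul, pow_mul', neg_one_sq, one_pow]
  rw [wedgeMatrix, det_fromBlocks_zero_replicateRow_replicateCol _ _ (Sum.elim x₁ x₂),
    sumElim_dotProduct_sumElim, hdot₁, hdot₂, det_fromBlocks_zero₂₁,
    det_adjMatrix_pathGraph_two_mul, det_adjMatrix_pathGraph_two_mul]
  · linear_combination (2 * (-1) ^ q) * hsign p + (2 * (-1) ^ p) * hsign q
  · simp [fromBlocks_mulVec, hx₁, hx₂]

end

namespace Walk

variable {V : Type*} {G : SimpleGraph V} {w : V} {c : G.Walk w w} {i j : ℕ}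

theorem IsCycle.getVert_ne_start (hc : c.IsCycle) (hi : 0 < i) (hin : i < c.length) :
    c.getVert i ≠ w := by
  rw [Ne, hc.getVert_endpoint_iff hin.le]
  omega

theorem IsCycle.getVert_eq_getVert_iff (hc : c.IsCycle) (hi : 0 < i) (hin : i < c.length)
    (hj : j ≤ c.length) : c.getVert i = c.getVert j ↔ i = j := by
  refine ⟨fun h => ?_, fun h => h ▸ rfl⟩
  rcases Nat.eq_zero_or_pos j with rfl | hj₀
  · exact absurd (h.trans (getVert_zero c)) (hc.getVert_ne_start hi hin)
  · exact hc.getVert_injOn ⟨hi, hin.le⟩ ⟨hj₀, hj⟩ h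

theorem IsCycle.mk_getVert_mem_edges_iff (hc : c.IsCycle) (hi : 0 < i) (hin : i < c.length)
    {y : V} : s(c.getVert i, y) ∈ c.edges ↔ y = c.getVert (i - 1) ∨ y = c.getVert (i + 1) := by
  rw [mk_mem_edges_iff_exists]
  constructor
  · rintro ⟨t, ht, he⟩
    rcases Sym2.eq_iff.mp he with ⟨h₁, rfl⟩ | ⟨rfl, h₂⟩
    · rw [(hc.getVert_eq_getVert_iff hi hin ht.le).mp h₁.symm]
      exact Or.inr rfl
    · obtain rfl := (hc.getVert_eq_getVert_iff hi hin ht).mp h₂.symm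
      exact Or.inl rfl
  · rintro (rfl | rfl)
    · exact ⟨i - 1, by omega, by rw [Nat.sub_add_cancel hi, Sym2.eq_swap]⟩
    · exact ⟨i, hin, rfl⟩

end Walk

variable {V : Type*} {G : SimpleGraph V} {w : V} {c₁ c₂ : G.Walk w w} {i j : ℕ}

theorem adj_getVert_iff_mk_mem_edges (hc₁ : c₁.IsCycle)
    (hshare : ∀ x ∈ c₁.support, x ∈ c₂.support → x = w)
    (hedge : ∀ e ∈ G.edgeSet, e ∈ c₁.edges ∨ e ∈ c₂.edges) (hi : 0 < i) (hin : i < c₁.length)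
    {y : V} : G.Adj (c₁.getVert i) y ↔ s(c₁.getVert i, y) ∈ c₁.edges := by
  refine ⟨fun h => (hedge _ h).resolve_right fun h₂ => ?_, c₁.adj_of_mem_edges⟩
  exact hc₁.getVert_ne_start hi hin
    (hshare _ (c₁.getVert_mem_support i) (c₂.fst_mem_support_of_mem_edges h₂))

theorem adj_getVert_getVert_iff (hc₁ : c₁.IsCycle)
    (hshare : ∀ x ∈ c₁.support, x ∈ c₂.support → x = w)
    (hedge : ∀ e ∈ G.edgeSet, e ∈ c₁.edges ∨ e ∈ c₂.edges) (hi : i + 1 < c₁.length)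
    (hj : j + 1 < c₁.length) :
    G.Adj (c₁.getVert (i + 1)) (c₁.getVert (j + 1)) ↔ i + 1 = j ∨ j + 1 = i := by
  rw [adj_getVert_iff_mk_mem_edges hc₁ hshare hedge (by omega) hi,
    hc₁.mk_getVert_mem_edges_iff (by omega) hi, hc₁.getVert_eq_getVert_iff (by omega) hj (by omega),
    hc₁.getVert_eq_getVert_iff (by omega) hj (by omega)]
  omega

theorem adj_getVert_start_iff (hc₁ : c₁.IsCycle)
    (hshare : ∀ x ∈ c₁.support, x ∈ c₂.support → x = w)
    (hedge : ∀ e ∈ G.edgeSet, e ∈ c₁.edges ∨ e ∈ c₂.edges) (hi : i + 1 < c₁.length) :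
    G.Adj (c₁.getVert (i + 1)) w ↔ i = 0 ∨ i + 2 = c₁.length := by
  rw [adj_getVert_iff_mk_mem_edges hc₁ hshare hedge (by omega) hi,
    hc₁.mk_getVert_mem_edges_iff (by omega) hi, eq_comm, eq_comm (a := w),
    hc₁.getVert_endpoint_iff (by omega), hc₁.getVert_endpoint_iff (by omega)]
  omega

theorem not_adj_getVert_getVert (hc₁ : c₁.IsCycle) (hc₂ : c₂.IsCycle)
    (hshare : ∀ x ∈ c₁.support, x ∈ c₂.support → x = w)
    (hedge : ∀ e ∈ G.edgeSet, e ∈ c₁.edges ∨ e ∈ c₂.edges) (hi : i + 1 < c₁.length)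
    (hj : j + 1 < c₂.length) : ¬ G.Adj (c₁.getVert (i + 1)) (c₂.getVert (j + 1)) := by
  rw [adj_getVert_iff_mk_mem_edges hc₁ hshare hedge (by omega) hi]
  exact fun h => hc₂.getVert_ne_start (by omega) hj
    (hshare _ (c₁.snd_mem_support_of_mem_edges h) (c₂.getVert_mem_support _))

def wedgeLabel (c₁ c₂ : G.Walk w w) : Unit ⊕ (Fin (c₁.length - 1) ⊕ Fin (c₂.length - 1)) → V :=
  Sum.elim (fun _ => w) (Sum.elim (fun i => c₁.getVert (i + 1)) fun j => c₂.getVert (j + 1))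

theorem wedgeLabel_injective (hc₁ : c₁.IsCycle) (hc₂ : c₂.IsCycle)
    (hshare : ∀ x ∈ c₁.support, x ∈ c₂.support → x = w) :
    Function.Injective (wedgeLabel c₁ c₂) := by
  have hne₁ (i : Fin (c₁.length - 1)) : c₁.getVert (i + 1) ≠ w :=
    hc₁.getVert_ne_start (by omega) (by omega)
  refine Function.Injective.sumElim (fun _ _ _ => rfl)
    (Function.Injective.sumElim (fun i j h => ?_) (fun i j h => ?_) fun i j h => ?_) ?_
  · have := hc₁.getVert_injOn ⟨by omega, by omega⟩ ⟨by omega, by omega⟩ h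
    omega
  · have := hc₂.getVert_injOn ⟨by omega, by omega⟩ ⟨by omega, by omega⟩ h
    omega
  · exact hne₁ i (hshare _ (c₁.getVert_mem_support _) (h ▸ c₂.getVert_mem_support _))
  · rintro _ (i | j) h
    · exact hne₁ i h.symm
    · exact hc₂.getVert_ne_start (by omega) (by omega) h.symm

theorem adjMatrix_submatrix_wedgeLabel (R : Type*) [Zero R] [One R] [DecidableRel G.Adj]
    (hc₁ : c₁.IsCycle) (hc₂ : c₂.IsCycle) (hshare : ∀ x ∈ c₁.support, x ∈ c₂.support → x = w)
    (hedge : ∀ e ∈ G.edgeSet, e ∈ c₁.edges ∨ e ∈ c₂.edges) :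
    (G.adjMatrix R).submatrix (wedgeLabel c₁ c₂) (wedgeLabel c₁ c₂) =
      wedgeMatrix R (c₁.length - 1) (c₂.length - 1) := by
  have hshare' : ∀ x ∈ c₂.support, x ∈ c₁.support → x = w := fun x h₂ h₁ => hshare x h₁ h₂
  have hedge' : ∀ e ∈ G.edgeSet, e ∈ c₂.edges ∨ e ∈ c₁.edges := fun e he => (hedge e he).symm
  ext (_ | i | i) (_ | j | j) <;>
    simp only [submatrix_apply, wedgeLabel, wedgeMatrix, Sum.elim_inl, Sum.elim_inr,
      adjMatrix_apply, fromBlocks_apply₁₁, fromBlocks_apply₁₂, fromBlocks_apply₂₁, fromBlocks_apply₂₂,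
      replicateRow_apply, replicateCol_apply, Matrix.zero_apply, pathEndsIndicator, pathGraph_adj]
  · exact if_neg G.irrefl
  · exact if_congr (G.adj_comm _ _ |>.trans <|
      (adj_getVert_start_iff hc₁ hshare hedge (by omega)).trans (by omega)) rfl rfl
  · exact if_congr (G.adj_comm _ _ |>.trans <|
      (adj_getVert_start_iff hc₂ hshare' hedge' (by omega)).trans (by omega)) rfl rfl
  · exact if_congr ((adj_getVert_start_iff hc₁ hshare hedge (by omega)).trans (by omega)) rfl rfl
  · exact if_congr (adj_getVert_getVert_iff hc₁ hshare hedge (by omega) (by omega)) rfl rfl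
  · exact if_neg (not_adj_getVert_getVert hc₁ hc₂ hshare hedge (by omega) (by omega))
  · exact if_congr ((adj_getVert_start_iff hc₂ hshare' hedge' (by omega)).trans (by omega)) rfl rfl
  · exact if_neg (not_adj_getVert_getVert hc₂ hc₁ hshare' hedge' (by omega) (by omega))
  · exact if_congr (adj_getVert_getVert_iff hc₂ hshare' hedge' (by omega) (by omega)) rfl rfl

theorem det_adjMatrix_of_cycle_wedge (R : Type*) [CommRing R] [Fintype V] [DecidableEq V]
    [DecidableRel G.Adj] {p q : ℕ} (hc₁ : c₁.IsCycle) (hc₂ : c₂.IsCycle)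
    (hshare : ∀ x ∈ c₁.support, x ∈ c₂.support → x = w)
    (hedge : ∀ e ∈ G.edgeSet, e ∈ c₁.edges ∨ e ∈ c₂.edges)
    (hcard : Fintype.card V = c₁.length + c₂.length - 1)
    (hlen₁ : c₁.length = 2 * p + 1) (hlen₂ : c₂.length = 2 * q + 1) :
    (G.adjMatrix R).det = 2 * ((-1) ^ p + (-1) ^ q) := by
  have h₁ := hc₁.three_le_length
  have h₂ := hc₂.three_le_length
  have hbij : Function.Bijective (wedgeLabel c₁ c₂) :=
    (Fintype.bijective_iff_injective_and_card _).mpr ⟨wedgeLabel_injective hc₁ hc₂ hshare, by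
      simp only [Fintype.card_sum, Fintype.card_unit, Fintype.card_fin, hcard]
      omega⟩
  rw [← det_submatrix_equiv_self (Equiv.ofBijective _ hbij), Equiv.coe_ofBijective,
    adjMatrix_submatrix_wedgeLabel R hc₁ hc₂ hshare hedge,
    show c₁.length - 1 = 2 * p by omega, show c₂.length - 1 = 2 * q by omega]
  exact det_wedgeMatrix (by omega) (by omega)

end SimpleGraph

open SimpleGraph Walk

theorem det_wedge_of_two_odd_cycles_general {V : Type*} [Fintype V] [DecidableEq V]
    (G : SimpleGraph V) [DecidableRel G.Adj]
    (k l : ℕ) (hko : Odd k) (hlo : Odd l)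
    (hcard : Fintype.card V = k + l - 1)
    (u v : V) (c₁ : G.Walk u u) (c₂ : G.Walk v v)
    (hc₁ : c₁.IsCycle) (hc₂ : c₂.IsCycle)
    (hlen₁ : c₁.length = k) (hlen₂ : c₂.length = l)
    (hshare : ∃! w : V, w ∈ c₁.support ∧ w ∈ c₂.support)
    (hedge : ∀ e ∈ G.edgeSet, e ∈ c₁.edges ∨ e ∈ c₂.edges) :
    (G.adjMatrix ℤ).det = 2 * (-1) ^ (l + k - 1) * ((-1) ^ ((l - 1) / 2 + 1) + (-1) ^ ((k - 1) / 2 + 1)) := by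
  obtain ⟨w, ⟨hw₁, hw₂⟩, hw⟩ := hshare
  obtain ⟨p, rfl⟩ := hko
  obtain ⟨q, rfl⟩ := hlo
  rw [det_adjMatrix_of_cycle_wedge ℤ (p := p) (q := q) (hc₁.rotate hw₁) (hc₂.rotate hw₂)
    (fun x h₁ h₂ => hw x ⟨by simpa using h₁, by simpa using h₂⟩)
    (fun e he => by simpa [(rotate_edges _ _ _).perm.mem_iff] using hedge e he)
    (by simp [hcard, hlen₁, hlen₂]) (by simp [hlen₁]) (by simp [hlen₂])]
  rw [show 2 * q + 1 + (2 * p + 1) - 1 = 2 * (p + q) + 1 by omega,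
    show (2 * q + 1 - 1) / 2 = q by omega, show (2 * p + 1 - 1) / 2 = p by omega,
    pow_succ _ (2 * (p + q)), pow_mul, neg_one_sq, one_pow]
  ring

theorem det_wedge_of_two_odd_cycles {V : Type*} [Fintype V] [DecidableEq V]
    (G : SimpleGraph V) [DecidableRel G.Adj]
    (k l : ℕ) (hk3 : 3 ≤ k) (hl3 : 3 ≤ l) (hko : Odd k) (hlo : Odd l)
    (hcard : Fintype.card V = k + l - 1)
    (u v : V) (c₁ : G.Walk u u) (c₂ : G.Walk v v)
    (hc₁ : c₁.IsCycle) (hc₂ : c₂.IsCycle)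
    (hlen₁ : c₁.length = k) (hlen₂ : c₂.length = l)
    (hshare : ∃! w : V, w ∈ c₁.support ∧ w ∈ c₂.support)
    (hvert : ∀ x : V, x ∈ c₁.support ∨ x ∈ c₂.support)
    (hedge : ∀ e ∈ G.edgeSet, e ∈ c₁.edges ∨ e ∈ c₂.edges) :
    (G.adjMatrix ℤ).det = 2 * (-1) ^ (l + k - 1) * ((-1) ^ ((l - 1) / 2 + 1) + (-1) ^ ((k - 1) / 2 + 1)) :=
  det_wedge_of_two_odd_cycles_general G k l hko hlo hcard u v c₁ c₂ hc₁ hc₂ hlen₁ hlen₂ hshare hedge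
end
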